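/- arXiv:1610.02889 — 8 statements merged into one kernel-verified Lean document; each statement's English description precedes it below -/
import Mathlib

section
/- Let f: ℝⁿ → ℝ be strongly convex, C ⊂ ℝⁿ nonempty closed convex, x ∈ ℝⁿ, x* ∈ ∂f(x). A point x̂ ∈ C equals the Bregman projection Π_C^{x*}(x) if and only if there exists x̂* ∈ ∂f(x̂) with ⟨x̂* − x*, y − x̂⟩ ≥ 0 for all y ∈ C. -/
/-!
The projection `xhat` minimises `y ↦ f y - ⟪xs, y⟫` over `C`. For a continuous convex `p`
minimised over a convex set `S` at `x₀`, separating the open strict epigraph of `p` from the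
horizontal slice `S × {p x₀}` by Hahn–Banach yields a functional that is at once a subgradient
of `p` at `x₀` and nonnegative on `S - x₀`; adding `xs` back turns it into the required `xhs`.
The converse is immediate from the subgradient inequality.
-/

open RealInnerProductSpace Filter Set

section Separation

variable {E : Type*} [TopologicalSpace E] [AddCommGroup E] [Module ℝ E]
  [IsTopologicalAddGroup E] [ContinuousSMul ℝ E]

theorem ConvexOn.exists_subgradient_of_isMinOn {p : E → ℝ} (hp : ConvexOn ℝ univ p)
    (hpc : Continuous p) {S : Set E} (hS : Convex ℝ S) {x₀ : E} (hx₀ : x₀ ∈ S)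
    (hmin : IsMinOn p S x₀) :
    ∃ ℓ : StrongDual ℝ E, (∀ y, p x₀ + ℓ (y - x₀) ≤ p y) ∧ ∀ y ∈ S, 0 ≤ ℓ (y - x₀) := by
  have hA : IsOpen {q : E × ℝ | q.1 ∈ univ ∧ p q.1 < q.2} := by
    simpa using isOpen_lt (hpc.comp continuous_fst) continuous_snd
  have hdisj : Disjoint {q : E × ℝ | q.1 ∈ univ ∧ p q.1 < q.2} (S ×ˢ {p x₀}) := by
    rw [Set.disjoint_left]
    rintro ⟨y, t⟩ ⟨-, hlt⟩ ⟨hy, rfl : t = p x₀⟩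
    exact (hmin hy).not_gt hlt
  obtain ⟨φ, c, hφA, hφB⟩ := geometric_hahn_banach_open hp.convex_strict_epigraph hA
    (hS.prod (convex_singleton (p x₀))) hdisj
  -- The graph of `p` lies in the closure of its strict epigraph.
  have hgraph : ∀ y, φ (y, p y) ≤ c := fun y =>
    le_of_tendsto ((φ.continuous.comp (Continuous.prodMk_right y)).continuousWithinAt
      (s := Ioi (p y)) |>.tendsto)
      (eventually_nhdsWithin_of_forall fun t ht => (hφA (y, t) ⟨trivial, ht⟩).le)
  have hc : φ (x₀, p x₀) = c := le_antisymm (hgraph x₀) (hφB _ ⟨hx₀, rfl⟩)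
  set ψ := φ.comp (ContinuousLinearMap.inl ℝ E ℝ)
  set s := φ (0, 1)
  have hφ : ∀ y t, φ (y, t) = ψ y + t * s := fun y t => by
    rw [show (y, t) = (y, 0) + t • ((0 : E), (1 : ℝ)) by simp, map_add, map_smul, smul_eq_mul]
    rfl
  have hs : s < 0 := by
    have := hφA (x₀, p x₀ + 1) ⟨trivial, by linarith⟩
    rw [← hc, hφ, hφ] at this
    linarith
  refine ⟨(-s)⁻¹ • ψ, fun y => ?_, fun y hy => ?_⟩
  · have := hgraph y
    rw [← hc, hφ, hφ] at this
    rw [smul_apply, map_sub, smul_eq_mul, ← le_sub_iff_add_le',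
      inv_mul_le_iff₀ (neg_pos.mpr hs)]
    nlinarith
  · have := hφB (y, p x₀) ⟨hy, rfl⟩
    rw [← hc, hφ, hφ] at this
    rw [smul_apply, map_sub, smul_eq_mul]
    exact mul_nonneg (inv_nonneg.mpr (neg_nonneg.mpr hs.le)) (by linarith)

end Separation

section InnerProduct

variable {E : Type*} [NormedAddCommGroup E] [InnerProductSpace ℝ E] [CompleteSpace E]

theorem isMinOn_sub_inner_iff_exists_subgradient {f : E → ℝ} (hf : ConvexOn ℝ univ f)
    (hfc : Continuous f) {C : Set E} (hC : Convex ℝ C) {xhat : E} (hxhat : xhat ∈ C) (xs : E) :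
    IsMinOn (fun y => f y - ⟪xs, y⟫) C xhat ↔
      ∃ xhs : E, (∀ z, f xhat + ⟪xhs, z - xhat⟫ ≤ f z) ∧ ∀ y ∈ C, 0 ≤ ⟪xhs - xs, y - xhat⟫ := by
  constructor
  · intro hmin
    obtain ⟨ℓ, hsub, hnormal⟩ :=
      (hf.sub ((innerₛₗ ℝ xs).concaveOn convex_univ)).exists_subgradient_of_isMinOn
        (hfc.sub (continuous_const.inner continuous_id)) hC hxhat hmin
    refine ⟨xs + (InnerProductSpace.toDual ℝ E).symm ℓ, fun z => ?_, fun y hy => ?_⟩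
    · have := hsub z
      simp only [Pi.sub_apply, innerₛₗ_apply_apply] at this
      rw [inner_add_left, InnerProductSpace.toDual_symm_apply, inner_sub_right]
      linarith
    · simpa [InnerProductSpace.toDual_symm_apply] using hnormal y hy
  · rintro ⟨xhs, hsub, hnormal⟩ y hy
    have hnormal_y := hnormal y hy
    have hsub_y := hsub y
    rw [inner_sub_left, inner_sub_right, inner_sub_right] at hnormal_y
    rw [inner_sub_right] at hsub_y
    show f xhat - ⟪xs, xhat⟫ ≤ f y - ⟪xs, y⟫
    linarith

end InnerProduct

theorem stmt_3_general {n : ℕ} (f : EuclideanSpace ℝ (Fin n) → ℝ)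
    (hconv : ConvexOn ℝ Set.univ f)
    (C : Set (EuclideanSpace ℝ (Fin n)))
    (hCconv : Convex ℝ C)
    (x xs : EuclideanSpace ℝ (Fin n))
    (xhat : EuclideanSpace ℝ (Fin n)) (hxhat : xhat ∈ C) :
    (∀ y ∈ C, f xhat - f x - ⟪xs, xhat - x⟫ ≤ f y - f x - ⟪xs, y - x⟫) ↔
    (∃ xhs : EuclideanSpace ℝ (Fin n), (∀ z, f xhat + ⟪xhs, z - xhat⟫ ≤ f z) ∧
      ∀ y ∈ C, 0 ≤ ⟪xhs - xs, y - xhat⟫) := by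
  have hf : Continuous f := continuousOn_univ.mp (hconv.continuousOn isOpen_univ)
  rw [← isMinOn_sub_inner_iff_exists_subgradient hconv hf hCconv hxhat, isMinOn_iff]
  refine forall₂_congr fun y _ => ?_
  simp only [inner_sub_right]
  constructor <;> intro h <;> linarith

/-- variational characterization of the Bregman projection. -/
theorem stmt_3 {n : ℕ} (f : EuclideanSpace ℝ (Fin n) → ℝ) (α : ℝ) (hα : 0 < α)
    (hconv : ConvexOn ℝ Set.univ f)
    (hsc : ∀ x y xs : EuclideanSpace ℝ (Fin n),
      (∀ z, f x + ⟪xs, z - x⟫ ≤ f z) →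
      f x + ⟪xs, y - x⟫ + α / 2 * ‖y - x‖ ^ 2 ≤ f y)
    (C : Set (EuclideanSpace ℝ (Fin n))) (hC : C.Nonempty) (hCc : IsClosed C)
    (hCconv : Convex ℝ C)
    (x xs : EuclideanSpace ℝ (Fin n))
    (hxs : ∀ z, f x + ⟪xs, z - x⟫ ≤ f z)
    (xhat : EuclideanSpace ℝ (Fin n)) (hxhat : xhat ∈ C) :
    (∀ y ∈ C, f xhat - f x - ⟪xs, xhat - x⟫ ≤ f y - f x - ⟪xs, y - x⟫) ↔
    (∃ xhs : EuclideanSpace ℝ (Fin n), (∀ z, f xhat + ⟪xhs, z - xhat⟫ ≤ f z) ∧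
      ∀ y ∈ C, 0 ≤ ⟪xhs - xs, y - xhat⟫) :=
  stmt_3_general f hconv C hCconv x xs xhat hxhat
end

section
/- Let f: ℝⁿ → ℝ be α-strongly convex, u ∈ ℝⁿ nonzero, β ∈ ℝ, x ∈ ℝⁿ, x* ∈ ∂f(x), and let x̂ be the Bregman projection of x onto the hyperplane H(u,β) = {y : ⟨u,y⟩ = β} with admissible subgradient x̂* = x* − t̂·u where t̂ minimizes t ↦ f*(x* − t·u) + t·β. Then for all y ∈ H(u,β): D_f^{x̂*}(x̂, y) ≤ D_f^{x*}(x, y) − (α/2)·(⟨u,x⟩ − β)²/‖u‖². -/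
open RealInnerProductSpace

/-- descent estimate for the Bregman projection onto a hyperplane
`H(u, β)` computed via the dual line search `t ↦ f*(x* - t u) + t β`. -/
theorem stmt_5 {n : ℕ} (f : EuclideanSpace ℝ (Fin n) → ℝ) (α : ℝ) (hα : 0 < α)
    (hconv : ConvexOn ℝ Set.univ f)
    (hsc : ∀ x y xs : EuclideanSpace ℝ (Fin n),
      (∀ z, f x + ⟪xs, z - x⟫ ≤ f z) →
      f x + ⟪xs, y - x⟫ + α / 2 * ‖y - x‖ ^ 2 ≤ f y)
    (fstar : EuclideanSpace ℝ (Fin n) → ℝ)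
    (hfstar : ∀ w, fstar w = ⨆ z : EuclideanSpace ℝ (Fin n), (⟪w, z⟫ - f z))
    (u : EuclideanSpace ℝ (Fin n)) (hu : u ≠ 0) (β : ℝ)
    (x xs : EuclideanSpace ℝ (Fin n))
    (hxs : ∀ z, f x + ⟪xs, z - x⟫ ≤ f z)
    (that : ℝ)
    (hthat : ∀ t : ℝ, fstar (xs - that • u) + that * β ≤ fstar (xs - t • u) + t * β)
    (xhat xhs : EuclideanSpace ℝ (Fin n))
    (hxhatH : ⟪u, xhat⟫ = β)
    (hxhs : xhs = xs - that • u)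
    (hxhssub : ∀ z, f xhat + ⟪xhs, z - xhat⟫ ≤ f z) :
    ∀ y : EuclideanSpace ℝ (Fin n), ⟪u, y⟫ = β →
      f y - f xhat - ⟪xhs, y - xhat⟫ ≤
        (f y - f x - ⟪xs, y - x⟫) - α / 2 * (⟪u, x⟫ - β) ^ 2 / ‖u‖ ^ 2 := by
  intro y hy
  have hN : (0:ℝ) < ‖u‖^2 := by
    have := norm_pos_iff.mpr hu
    positivity
  have h1 := hsc x xhat xs hxs
  have key : ⟪xhs, y - xhat⟫ = ⟪xs, y - xhat⟫ := by
    rw [hxhs, inner_sub_left, real_inner_smul_left, inner_sub_right, inner_sub_right, hy, hxhatH]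
    ring
  have hsplit : ⟪xs, y - x⟫ = ⟪xs, y - xhat⟫ + ⟪xs, xhat - x⟫ := by
    rw [inner_sub_right, inner_sub_right, inner_sub_right]; ring
  have heq : ⟪u, x⟫ - β = ⟪u, x - xhat⟫ := by
    rw [inner_sub_right, hxhatH]
  have hcs : (⟪u, x⟫ - β)^2 ≤ ‖u‖^2 * ‖xhat - x‖^2 := by
    rw [heq]
    have h3 := abs_real_inner_le_norm u (x - xhat)
    have h2 : ‖x - xhat‖ = ‖xhat - x‖ := norm_sub_rev _ _
    have h4 : (⟪u, x - xhat⟫)^2 ≤ (‖u‖ * ‖x - xhat‖)^2 := by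
      rw [← sq_abs]; exact pow_le_pow_left₀ (abs_nonneg _) h3 2
    rw [h2] at h4
    nlinarith [h4]
  have hdiv : α / 2 * (⟪u, x⟫ - β) ^ 2 / ‖u‖ ^ 2 ≤ α / 2 * ‖xhat - x‖ ^ 2 := by
    rw [div_le_iff₀ hN]
    nlinarith
  linarith [key, hsplit, h1, hdiv]
end

section
/- Let f: ℝⁿ → ℝ be strongly convex, C ⊂ ℝⁿ nonempty closed convex. For every x ∈ ℝⁿ, x* ∈ ∂f(x) and y* ∈ ∂f(P_C(x)) (where P_C is the orthogonal projection onto C): dist_f^{x*}(x,C)² ≤ ‖x* − y*‖ · dist(x,C), where dist_f^{x*}(x,C)² := min_{y∈C} D_f^{x*}(x,y) and dist(x,C) := min_{y∈C} ‖x − y‖. -/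
open RealInnerProductSpace

/-- the minimal Bregman distance to `C` squared is bounded by
`‖x* - y*‖ · dist(x, C)`, where `y*` is a subgradient at the orthogonal projection of `x`. -/
theorem stmt_6 {n : ℕ} (f : EuclideanSpace ℝ (Fin n) → ℝ) (α : ℝ) (hα : 0 < α)
    (hconv : ConvexOn ℝ Set.univ f)
    (hsc : ∀ x y xs : EuclideanSpace ℝ (Fin n),
      (∀ z, f x + ⟪xs, z - x⟫ ≤ f z) →
      f x + ⟪xs, y - x⟫ + α / 2 * ‖y - x‖ ^ 2 ≤ f y)
    (C : Set (EuclideanSpace ℝ (Fin n))) (hC : C.Nonempty) (hCc : IsClosed C)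
    (hCconv : Convex ℝ C)
    (x xs p ys : EuclideanSpace ℝ (Fin n))
    (hxs : ∀ z, f x + ⟪xs, z - x⟫ ≤ f z)
    (hp : p ∈ C) (hpproj : ∀ q ∈ C, ‖x - p‖ ≤ ‖x - q‖)
    (hys : ∀ z, f p + ⟪ys, z - p⟫ ≤ f z) :
    sInf ((fun y => f y - f x - ⟪xs, y - x⟫) '' C) ≤
      ‖xs - ys‖ * Metric.infDist x C := by
  have hbdd : BddBelow ((fun y => f y - f x - ⟪xs, y - x⟫) '' C) := by
    refine ⟨0, ?_⟩
    rintro _ ⟨y, hy, rfl⟩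
    have := hxs y
    simp only
    linarith
  have h1 : sInf ((fun y => f y - f x - ⟪xs, y - x⟫) '' C) ≤ f p - f x - ⟪xs, p - x⟫ :=
    csInf_le hbdd ⟨p, hp, rfl⟩
  have h2 : f p - f x ≤ ⟪ys, p - x⟫ := by
    have := hys x
    have hsymm : ⟪ys, x - p⟫ = -⟪ys, p - x⟫ := by
      rw [← inner_neg_right]; congr 1; abel
    linarith [hsymm ▸ this]
  have h3 : f p - f x - ⟪xs, p - x⟫ ≤ ⟪ys - xs, p - x⟫ := by
    rw [inner_sub_left]; linarith
  have h4 : ⟪ys - xs, p - x⟫ ≤ ‖ys - xs‖ * ‖p - x‖ := real_inner_le_norm _ _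
  have h5 : Metric.infDist x C = ‖x - p‖ := by
    refine le_antisymm ?_ ?_
    · simpa [dist_eq_norm] using Metric.infDist_le_dist_of_mem hp
    · by_contra h
      push_neg at h
      obtain ⟨q, hq, hlt⟩ := (Metric.infDist_lt_iff hC).mp h
      exact absurd (hpproj q hq) (by rw [dist_eq_norm] at hlt; linarith)
  have h6 : ‖ys - xs‖ = ‖xs - ys‖ := norm_sub_rev _ _
  have h7 : ‖p - x‖ = ‖x - p‖ := norm_sub_rev _ _
  rw [h5]
  calc sInf ((fun y => f y - f x - ⟪xs, y - x⟫) '' C) ≤ ⟪ys - xs, p - x⟫ := by linarith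
    _ ≤ ‖ys - xs‖ * ‖p - x‖ := h4
    _ = ‖xs - ys‖ * ‖x - p‖ := by rw [h6, h7]
end

section
/- Let C = {x ∈ ℝⁿ : Ax ∈ Q} with A ∈ ℝ^{m×n} and Q ⊂ ℝᵐ closed convex such that the collection {Q, Range(A)} is boundedly linearly regular, and assume C is nonempty. Then for every R > 0 there exists γ > 0 such that for all x with ‖x‖ ≤ R: dist(x, C) ≤ γ · dist(Ax, Q). -/
open RealInnerProductSpace

set_option maxHeartbeats 1000000 in
/-- error bound for sets of the form `C = {x : A x ∈ Q}` under bounded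
linear regularity of `{Q, Range(A)}`. -/
theorem stmt_9 {m n : ℕ}
    (A : EuclideanSpace ℝ (Fin n) →ₗ[ℝ] EuclideanSpace ℝ (Fin m))
    (Q : Set (EuclideanSpace ℝ (Fin m))) (hQc : IsClosed Q) (hQconv : Convex ℝ Q)
    (C : Set (EuclideanSpace ℝ (Fin n)))
    (hCdef : C = {x : EuclideanSpace ℝ (Fin n) | A x ∈ Q})
    (hCne : C.Nonempty)
    (hreg : ∀ R > (0 : ℝ), ∃ γ > (0 : ℝ), ∀ z : EuclideanSpace ℝ (Fin m), ‖z‖ ≤ R →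
      Metric.infDist z (Q ∩ Set.range A) ^ 2 ≤
        γ * (Metric.infDist z Q ^ 2 + Metric.infDist z (Set.range A) ^ 2)) :
    ∀ R > (0 : ℝ), ∃ γ > (0 : ℝ), ∀ x : EuclideanSpace ℝ (Fin n), ‖x‖ ≤ R →
      Metric.infDist x C ≤ γ * Metric.infDist (A x) Q := by
  -- a linear right inverse of `A.rangeRestrict`
  obtain ⟨B, hB⟩ := LinearMap.exists_rightInverse_of_surjective A.rangeRestrict
    (by rw [LinearMap.range_eq_top]; exact A.surjective_rangeRestrict)
  have hABw : ∀ w : LinearMap.range A, A (B w) = (w : EuclideanSpace ℝ (Fin m)) := by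
    intro w
    have := congrArg (fun f => f w) hB
    simpa [LinearMap.rangeRestrict, Subtype.ext_iff] using
      congrArg (Subtype.val) (LinearMap.congr_fun hB w)
  set Bc := LinearMap.toContinuousLinearMap B with hBc
  set c : ℝ := max ‖Bc‖ 1 with hc
  have hc1 : (1 : ℝ) ≤ c := le_max_right _ _
  have hc0 : (0 : ℝ) < c := lt_of_lt_of_le one_pos hc1
  set Ac := LinearMap.toContinuousLinearMap A with hAc
  intro R hR
  obtain ⟨γ, hγ0, hγ⟩ := hreg (‖Ac‖ * R + 1) (by positivity)
  refine ⟨c * Real.sqrt γ + 1, by positivity, ?_⟩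
  intro x hx
  -- the set S = Q ∩ range A
  set S : Set (EuclideanSpace ℝ (Fin m)) := Q ∩ Set.range A with hS
  obtain ⟨x₀, hx₀⟩ := hCne
  have hx₀Q : A x₀ ∈ Q := by rw [hCdef] at hx₀; exact hx₀
  have hSne : S.Nonempty := ⟨A x₀, hx₀Q, ⟨x₀, rfl⟩⟩
  have hAxmem : A x ∈ Set.range (⇑A) := ⟨x, rfl⟩
  -- norm bound on A x
  have hAx : ‖A x‖ ≤ ‖Ac‖ * R + 1 := by
    have := Ac.le_opNorm x
    have h2 : ‖Ac‖ * ‖x‖ ≤ ‖Ac‖ * R := by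
      exact mul_le_mul_of_nonneg_left hx (norm_nonneg _)
    calc ‖A x‖ = ‖Ac x‖ := rfl
      _ ≤ ‖Ac‖ * ‖x‖ := Ac.le_opNorm x
      _ ≤ ‖Ac‖ * R := h2
      _ ≤ ‖Ac‖ * R + 1 := by linarith
  -- regularity gives dist(Ax, S) ≤ √γ * dist(Ax, Q)
  have hd0 : Metric.infDist (A x) (Set.range (⇑A)) = 0 :=
    Metric.infDist_zero_of_mem hAxmem
  have h1 : Metric.infDist (A x) S ^ 2 ≤ γ * Metric.infDist (A x) Q ^ 2 := by
    have := hγ (A x) hAx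
    rw [hd0] at this
    simpa using this
  have h2 : Metric.infDist (A x) S ≤ Real.sqrt γ * Metric.infDist (A x) Q := by
    have hnn : 0 ≤ Metric.infDist (A x) S := Metric.infDist_nonneg
    have := Real.sqrt_le_sqrt h1
    rwa [Real.sqrt_sq hnn, Real.sqrt_mul hγ0.le, Real.sqrt_sq Metric.infDist_nonneg] at this
  -- pseudoinverse gives dist(x, C) ≤ c * dist(Ax, S)
  have h3 : Metric.infDist x C ≤ c * Metric.infDist (A x) S := by
    rw [← div_le_iff₀' hc0]
    by_contra hcon
    push_neg at hcon
    obtain ⟨w, hw, hwlt⟩ := (Metric.infDist_lt_iff hSne).mp hcon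
    obtain ⟨hwQ, y, hy⟩ := hw
    have hmem : A x - w ∈ LinearMap.range A := by
      refine ⟨x - y, ?_⟩
      rw [map_sub, hy]
    set v := B ⟨A x - w, hmem⟩ with hv
    have hAv : A v = A x - w := hABw ⟨A x - w, hmem⟩
    have huC : x - v ∈ C := by
      rw [hCdef]
      show A (x - v) ∈ Q
      rw [map_sub, hAv]
      simpa using hwQ
    have hdist : Metric.infDist x C ≤ ‖v‖ := by
      calc Metric.infDist x C ≤ dist x (x - v) := Metric.infDist_le_dist_of_mem huC
        _ = ‖v‖ := by rw [dist_eq_norm]; simp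
    have hvb : ‖v‖ ≤ c * dist (A x) w := by
      calc ‖v‖ = ‖Bc ⟨A x - w, hmem⟩‖ := rfl
        _ ≤ ‖Bc‖ * ‖(⟨A x - w, hmem⟩ : LinearMap.range A)‖ := Bc.le_opNorm _
        _ = ‖Bc‖ * ‖A x - w‖ := rfl
        _ ≤ c * ‖A x - w‖ := by
            exact mul_le_mul_of_nonneg_right (le_max_left _ _) (norm_nonneg _)
        _ = c * dist (A x) w := by rw [dist_eq_norm]
    have : Metric.infDist x C < Metric.infDist x C := by
      calc Metric.infDist x C ≤ ‖v‖ := hdist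
        _ ≤ c * dist (A x) w := hvb
        _ < c * (Metric.infDist x C / c) := by
            exact (mul_lt_mul_iff_right₀ hc0).mpr hwlt
        _ = Metric.infDist x C := by field_simp
    exact lt_irrefl _ this
  have hQnn : 0 ≤ Metric.infDist (A x) Q := Metric.infDist_nonneg
  calc Metric.infDist x C ≤ c * Metric.infDist (A x) S := h3
    _ ≤ c * (Real.sqrt γ * Metric.infDist (A x) Q) :=
        mul_le_mul_of_nonneg_left h2 hc0.le
    _ = (c * Real.sqrt γ) * Metric.infDist (A x) Q := by ring
    _ ≤ (c * Real.sqrt γ + 1) * Metric.infDist (A x) Q := by nlinarith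
end

section
/- Let Q ⊂ ℝᵐ be nonempty closed convex, A ∈ ℝ^{m×n}, and suppose x̃ ∉ C := {x ∈ ℝⁿ : Ax ∈ Q} with C nonempty. Set w := A x̃ − P_Q(A x̃) and β := ⟨Aᵀw, x̃⟩ − ‖w‖². Then Aᵀw ≠ 0, ⟨Aᵀw, x̃⟩ > β, and C ⊆ {x : ⟨Aᵀw, x⟩ ≤ β}; i.e., the hyperplane {x : ⟨Aᵀw, x⟩ = β} separates x̃ from C. -/
open RealInnerProductSpace

/-- the separating halfspace construction for split feasibility problems. -/
theorem stmt_11 {m n : ℕ}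
    (A : EuclideanSpace ℝ (Fin n) →ₗ[ℝ] EuclideanSpace ℝ (Fin m))
    (Q : Set (EuclideanSpace ℝ (Fin m))) (hQne : Q.Nonempty) (hQc : IsClosed Q)
    (hQconv : Convex ℝ Q)
    (C : Set (EuclideanSpace ℝ (Fin n)))
    (hCdef : C = {x : EuclideanSpace ℝ (Fin n) | A x ∈ Q})
    (hCne : C.Nonempty)
    (xt : EuclideanSpace ℝ (Fin n)) (hxt : xt ∉ C)
    (p : EuclideanSpace ℝ (Fin m)) (hp : p ∈ Q)
    (hpproj : ∀ q ∈ Q, ‖A xt - p‖ ≤ ‖A xt - q‖)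
    (w : EuclideanSpace ℝ (Fin m)) (hw : w = A xt - p)
    (β : ℝ) (hβ : β = ⟪LinearMap.adjoint A w, xt⟫ - ‖w‖ ^ 2) :
    LinearMap.adjoint A w ≠ 0 ∧
    β < ⟪LinearMap.adjoint A w, xt⟫ ∧
    C ⊆ {x : EuclideanSpace ℝ (Fin n) | ⟪LinearMap.adjoint A w, x⟫ ≤ β} := by
  have hwne : w ≠ 0 := by
    intro h
    apply hxt
    rw [hCdef]
    have : A xt = p := sub_eq_zero.mp (hw.symm.trans h)
    simpa [this] using hp
  haveI : Nonempty Q := hQne.to_subtype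
  have hnorm : ‖A xt - p‖ = ⨅ q : Q, ‖A xt - q‖ := by
    refine le_antisymm ?_ ?_
    · exact le_ciInf fun q => hpproj q q.2
    · exact ciInf_le ⟨0, fun r ⟨q, hq⟩ => hq ▸ norm_nonneg _⟩ (⟨p, hp⟩ : Q)
  have hchar := (norm_eq_iInf_iff_real_inner_le_zero hQconv hp).mp hnorm
  -- for q ∈ Q : ⟪w, q - p⟫ ≤ 0
  have key : ∀ q ∈ Q, ⟪w, q⟫ ≤ ⟪w, p⟫ := by
    intro q hq
    have := hchar q hq
    rw [← hw] at this
    have h2 : ⟪w, q - p⟫ ≤ 0 := this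
    rw [inner_sub_right] at h2
    linarith
  have hwp : ⟪w, p⟫ = ⟪w, A xt⟫ - ‖w‖ ^ 2 := by
    have : p = A xt - w := by rw [hw]; abel
    rw [this, inner_sub_right, real_inner_self_eq_norm_sq]
  have hCsub : C ⊆ {x : EuclideanSpace ℝ (Fin n) | ⟪LinearMap.adjoint A w, x⟫ ≤ β} := by
    intro x hx
    rw [hCdef] at hx
    have := key (A x) hx
    simp only [Set.mem_setOf_eq]
    rw [LinearMap.adjoint_inner_left, hβ, LinearMap.adjoint_inner_left]
    rw [hwp] at this
    linarith
  have hβlt : β < ⟪LinearMap.adjoint A w, xt⟫ := by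
    rw [hβ]
    have : (0:ℝ) < ‖w‖ ^ 2 := pow_pos (norm_pos_iff.mpr hwne) 2
    linarith
  refine ⟨?_, hβlt, hCsub⟩
  intro h0
  obtain ⟨x0, hx0⟩ := hCne
  have h1 := hCsub hx0
  simp only [Set.mem_setOf_eq, h0, inner_zero_left] at h1 hβlt
  linarith
end

section
/- Let f: ℝⁿ → ℝ be strongly convex piecewise linear-quadratic, C ⊂ ℝⁿ nonempty closed convex such that for every x with F_x ∩ C ≠ ∅ the collection {F_x, C} is boundedly linearly regular. Then for every R > 0 there exists L > 0 such that for all x with ‖x‖ ≤ R and all x* ∈ ∂f(x): dist_f^{x*}(x,C)² ≤ L · dist(x,C)². -/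
open RealInnerProductSpace Metric

-- closedness of polyhedral pieces
lemma aux_closed {n : ℕ} (S : Set (EuclideanSpace ℝ (Fin n)))
    (h : ∃ (k : ℕ) (c : Fin k → EuclideanSpace ℝ (Fin n)) (d : Fin k → ℝ),
      S = {x : EuclideanSpace ℝ (Fin n) | ∀ j, ⟪c j, x⟫ ≤ d j}) : IsClosed S := by
  obtain ⟨k, c, d, rfl⟩ := h
  have : {x : EuclideanSpace ℝ (Fin n) | ∀ j, ⟪c j, x⟫ ≤ d j}
      = ⋂ j, {x : EuclideanSpace ℝ (Fin n) | ⟪c j, x⟫ ≤ d j} := by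
    ext x; simp [Set.mem_iInter]
  rw [this]
  exact isClosed_iInter fun j => isClosed_le (innerSL ℝ (c j)).continuous continuous_const

-- quadratic expansion
lemma aux_quad {n : ℕ} (A : EuclideanSpace ℝ (Fin n) →ₗ[ℝ] EuclideanSpace ℝ (Fin n))
    (hsym : ∀ x y : EuclideanSpace ℝ (Fin n), ⟪A x, y⟫ = ⟪x, A y⟫)
    (a0 : EuclideanSpace ℝ (Fin n)) (c0 : ℝ) (x w : EuclideanSpace ℝ (Fin n)) :
    (1 / 2 * ⟪x + w, A (x + w)⟫ + ⟪a0, x + w⟫ + c0) - (1 / 2 * ⟪x, A x⟫ + ⟪a0, x⟫ + c0)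
      = ⟪A x + a0, w⟫ + 1 / 2 * ⟪w, A w⟫ := by
  have h1 : ⟪x, A w⟫ = ⟪A x, w⟫ := (hsym x w).symm
  have h2 : ⟪w, A x⟫ = ⟪A x, w⟫ := real_inner_comm _ _
  simp only [map_add, inner_add_left, inner_add_right]
  rw [h1, h2]; ring

-- local piece stability
lemma aux_eps {n p : ℕ} (F : Fin p → Set (EuclideanSpace ℝ (Fin n)))
    (hFc : ∀ i, IsClosed (F i)) (x : EuclideanSpace ℝ (Fin n)) :
    ∃ ε > (0:ℝ), ∀ z : EuclideanSpace ℝ (Fin n), dist z x < ε → ∀ i, z ∈ F i → x ∈ F i := by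
  classical
  set U : Set (EuclideanSpace ℝ (Fin n)) := ⋂ i : {i : Fin p // x ∉ F i}, (F i.1)ᶜ with hU
  have hUopen : IsOpen U := isOpen_iInter_of_finite fun i => (hFc i.1).isOpen_compl
  have hxU : x ∈ U := Set.mem_iInter.2 fun i => i.2
  obtain ⟨ε, hε, hball⟩ := Metric.isOpen_iff.1 hUopen x hxU
  refine ⟨ε, hε, fun z hz i hzi => ?_⟩
  by_contra hxi
  have : z ∈ U := hball (by simpa [Metric.mem_ball] using hz)
  exact (Set.mem_iInter.1 this ⟨i, hxi⟩) hzi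

lemma aux_dir {n p : ℕ} (f : EuclideanSpace ℝ (Fin n) → ℝ)
    (F : Fin p → Set (EuclideanSpace ℝ (Fin n)))
    (hcover : (⋃ i, F i) = Set.univ)
    (hFc : ∀ i, IsClosed (F i))
    (Aq : Fin p → (EuclideanSpace ℝ (Fin n) →ₗ[ℝ] EuclideanSpace ℝ (Fin n)))
    (hsym : ∀ i, ∀ x y : EuclideanSpace ℝ (Fin n), ⟪Aq i x, y⟫ = ⟪x, Aq i y⟫)
    (a : Fin p → EuclideanSpace ℝ (Fin n)) (c : Fin p → ℝ)
    (hf : ∀ i, ∀ x ∈ F i, f x = 1 / 2 * ⟪x, Aq i x⟫ + ⟪a i, x⟫ + c i)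
    (x xs : EuclideanSpace ℝ (Fin n))
    (hxs : ∀ z, f x + ⟪xs, z - x⟫ ≤ f z)
    (Δ : EuclideanSpace ℝ (Fin n)) (δ : ℝ) (hδ : 0 < δ) :
    ∃ i, x ∈ F i ∧ ⟪Aq i x + a i, Δ⟫ - δ ≤ ⟪xs, Δ⟫ := by
  classical
  obtain ⟨ε, hε, heps⟩ := aux_eps F hFc x
  have hcov : ∀ z : EuclideanSpace ℝ (Fin n), ∃ i, z ∈ F i := by
    intro z
    have : z ∈ ⋃ i, F i := hcover ▸ Set.mem_univ z
    simpa using this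
  set Bd : ℝ := ∑ i, ‖Aq i Δ‖ * ‖Δ‖ with hBd
  have hBd0 : 0 ≤ Bd := Finset.sum_nonneg fun i _ => mul_nonneg (norm_nonneg _) (norm_nonneg _)
  have hBdle : ∀ i, ⟪Δ, Aq i Δ⟫ ≤ Bd := by
    intro i
    calc ⟪Δ, Aq i Δ⟫ ≤ ‖Δ‖ * ‖Aq i Δ‖ := real_inner_le_norm _ _
    _ = ‖Aq i Δ‖ * ‖Δ‖ := mul_comm _ _
    _ ≤ Bd := Finset.single_le_sum (f := fun i => ‖Aq i Δ‖ * ‖Δ‖)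
        (fun j _ => mul_nonneg (norm_nonneg _) (norm_nonneg _)) (Finset.mem_univ i)
  set t : ℝ := min (ε / (2 * ‖Δ‖ + 1)) (2 * δ / (Bd + 1)) with ht
  have ht0 : 0 < t := lt_min (div_pos hε (by positivity)) (div_pos (by linarith) (by linarith))
  have htε : t * ‖Δ‖ < ε := by
    have h1 : t ≤ ε / (2 * ‖Δ‖ + 1) := min_le_left _ _
    have h2 : ε / (2 * ‖Δ‖ + 1) * ‖Δ‖ < ε := by
      rw [div_mul_eq_mul_div, div_lt_iff₀ (by positivity)]
      nlinarith [norm_nonneg Δ]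
    calc t * ‖Δ‖ ≤ ε / (2 * ‖Δ‖ + 1) * ‖Δ‖ := by nlinarith [norm_nonneg Δ]
    _ < ε := h2
  have htδ : t / 2 * Bd ≤ δ := by
    have h1 : t ≤ 2 * δ / (Bd + 1) := min_le_right _ _
    have : t * (Bd + 1) ≤ 2 * δ := by
      rw [← le_div_iff₀ (by linarith)]; exact h1
    nlinarith
  obtain ⟨j, hj⟩ := hcov (x - t • Δ)
  have hxj : x ∈ F j := heps _ (by
    rw [dist_eq_norm]
    simpa [norm_smul, abs_of_pos ht0] using htε) j hj
  refine ⟨j, hxj, ?_⟩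
  have hsub := hxs (x - t • Δ)
  have hquad : f (x - t • Δ) - f x = ⟪Aq j x + a j, -(t • Δ)⟫ + 1 / 2 * ⟪-(t • Δ), Aq j (-(t • Δ))⟫ := by
    have h1 := aux_quad (Aq j) (hsym j) (a j) (c j) x (-(t • Δ))
    rw [hf j x hxj, hf j _ (by simpa [sub_eq_add_neg] using hj)]
    convert h1 using 3 <;> abel
  have hA : ⟪-(t • Δ), Aq j (-(t • Δ))⟫ = t^2 * ⟪Δ, Aq j Δ⟫ := by
    simp [inner_neg_neg, inner_smul_left, inner_smul_right, map_smul]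
    ring
  have hin : ⟪Aq j x + a j, -(t • Δ)⟫ = -t * ⟪Aq j x + a j, Δ⟫ := by
    simp [inner_neg_right, inner_smul_right]
  have hxsin : ⟪xs, x - t • Δ - x⟫ = -t * ⟪xs, Δ⟫ := by
    have : x - t • Δ - x = -(t • Δ) := by abel
    rw [this]; simp [inner_neg_right, inner_smul_right]
  rw [hxsin] at hsub
  -- hsub : f x + (-t * ⟪xs, Δ⟫) ≤ f (x - t•Δ)
  have key : -t * ⟪xs, Δ⟫ ≤ -t * ⟪Aq j x + a j, Δ⟫ + t^2/2 * ⟪Δ, Aq j Δ⟫ := by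
    have := hquad
    rw [hin, hA] at this
    linarith
  have hdiv : ⟪Aq j x + a j, Δ⟫ - t/2 * ⟪Δ, Aq j Δ⟫ ≤ ⟪xs, Δ⟫ := by
    nlinarith [key, ht0]
  have : t/2 * ⟪Δ, Aq j Δ⟫ ≤ δ := by
    calc t/2 * ⟪Δ, Aq j Δ⟫ ≤ t/2 * Bd := by nlinarith [hBdle j, ht0]
    _ ≤ δ := htδ
  linarith
lemma aux_key {n p : ℕ} (f : EuclideanSpace ℝ (Fin n) → ℝ)
    (F : Fin p → Set (EuclideanSpace ℝ (Fin n)))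
    (hcover : (⋃ i, F i) = Set.univ)
    (hFc : ∀ i, IsClosed (F i))
    (Aq : Fin p → (EuclideanSpace ℝ (Fin n) →ₗ[ℝ] EuclideanSpace ℝ (Fin n)))
    (hsym : ∀ i, ∀ x y : EuclideanSpace ℝ (Fin n), ⟪Aq i x, y⟫ = ⟪x, Aq i y⟫)
    (a : Fin p → EuclideanSpace ℝ (Fin n)) (c : Fin p → ℝ)
    (hf : ∀ i, ∀ x ∈ F i, f x = 1 / 2 * ⟪x, Aq i x⟫ + ⟪a i, x⟫ + c i)
    (x y xs : EuclideanSpace ℝ (Fin n))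
    (hxs : ∀ z, f x + ⟪xs, z - x⟫ ≤ f z)
    (hyF : ∀ i, x ∈ F i → y ∈ F i)
    (β : ℝ) (hβ : ∀ i, ∀ v : EuclideanSpace ℝ (Fin n), ⟪v, Aq i v⟫ ≤ β * ‖v‖^2) :
    f y - f x - ⟪xs, y - x⟫ ≤ β / 2 * ‖y - x‖^2 := by
  refine le_of_forall_pos_le_add fun δ hδ => ?_
  obtain ⟨i, hxi, hdir⟩ := aux_dir f F hcover hFc Aq hsym a c hf x xs hxs (y - x) δ hδ
  have hyi : y ∈ F i := hyF i hxi
  have hquad : f y - f x = ⟪Aq i x + a i, y - x⟫ + 1 / 2 * ⟪y - x, Aq i (y - x)⟫ := by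
    have h1 := aux_quad (Aq i) (hsym i) (a i) (c i) x (y - x)
    have hx : x + (y - x) = y := by abel
    rw [hx] at h1
    rw [hf i x hxi, hf i y hyi, h1]
  have := hβ i (y - x)
  linarith
lemma aux_fb {n p : ℕ} (f : EuclideanSpace ℝ (Fin n) → ℝ)
    (F : Fin p → Set (EuclideanSpace ℝ (Fin n)))
    (hcover : (⋃ i, F i) = Set.univ)
    (Aq : Fin p → (EuclideanSpace ℝ (Fin n) →ₗ[ℝ] EuclideanSpace ℝ (Fin n)))
    (a : Fin p → EuclideanSpace ℝ (Fin n)) (c : Fin p → ℝ)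
    (hf : ∀ i, ∀ x ∈ F i, f x = 1 / 2 * ⟪x, Aq i x⟫ + ⟪a i, x⟫ + c i)
    (β A' C' r : ℝ) (hβ0 : 0 ≤ β) (hr : 0 ≤ r)
    (hβn : ∀ i (v : EuclideanSpace ℝ (Fin n)), ‖Aq i v‖ ≤ β * ‖v‖)
    (hA' : ∀ i, ‖a i‖ ≤ A') (hC' : ∀ i, |c i| ≤ C') :
    ∀ z : EuclideanSpace ℝ (Fin n), ‖z‖ ≤ r → |f z| ≤ β / 2 * r^2 + A' * r + C' := by
  intro z hz
  have : z ∈ ⋃ i, F i := hcover ▸ Set.mem_univ z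
  obtain ⟨i, hi⟩ := by simpa using this
  rw [hf i z hi]
  have h1 : |⟪z, Aq i z⟫| ≤ β * r^2 := by
    have ha := abs_real_inner_le_norm z (Aq i z)
    have h2 := hβn i z
    have h3 := norm_nonneg z
    have h4 := norm_nonneg (Aq i z)
    nlinarith [mul_le_mul_of_nonneg_left h2 h3, mul_le_mul hz hz h3 hr]
  have h2 : |⟪a i, z⟫| ≤ A' * r := by
    have ha := abs_real_inner_le_norm (a i) z
    have hb := hA' i
    nlinarith [norm_nonneg z, norm_nonneg (a i), mul_le_mul hb hz (norm_nonneg z) ((norm_nonneg (a i)).trans hb)]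
  have h3 := hC' i
  have := abs_add_le (1 / 2 * ⟪z, Aq i z⟫ + ⟪a i, z⟫) (c i)
  have := abs_add_le (1 / 2 * ⟪z, Aq i z⟫) (⟪a i, z⟫)
  rw [abs_mul] at *
  have : |(1:ℝ)/2| = 1/2 := by norm_num
  nlinarith [abs_nonneg (⟪z, Aq i z⟫), abs_nonneg (⟪a i, z⟫)]

lemma aux_delta {n : ℕ} (T C : Set (EuclideanSpace ℝ (Fin n)))
    (hT : IsClosed T) (hC : IsClosed C) (hCne : C.Nonempty)
    (hTC : T ∩ C = ∅) (R : ℝ) :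
    ∃ δ, 0 < δ ∧ ∀ z ∈ T ∩ Metric.closedBall (0 : EuclideanSpace ℝ (Fin n)) R,
      δ ≤ Metric.infDist z C := by
  set K := T ∩ Metric.closedBall (0 : EuclideanSpace ℝ (Fin n)) R with hK
  have hKc : IsCompact K := (isCompact_closedBall _ _).inter_left hT
  rcases Set.eq_empty_or_nonempty K with hKe | hKne
  · exact ⟨1, one_pos, fun z hz => absurd (hKe ▸ hz) (Set.notMem_empty z)⟩
  · obtain ⟨z0, hz0K, hmin⟩ := hKc.exists_isMinOn hKne
      ((Metric.continuous_infDist_pt C).continuousOn)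
    refine ⟨Metric.infDist z0 C, ?_, fun z hz => hmin hz⟩
    have hz0T : z0 ∈ T := hz0K.1
    have : z0 ∉ C := fun h => Set.notMem_empty z0 (hTC ▸ Set.mem_inter hz0T h)
    exact (hC.notMem_iff_infDist_pos hCne).mp this

set_option maxHeartbeats 1000000 in
/-- bound of the Bregman distance to `C` by the squared Euclidean distance,
for strongly convex piecewise linear-quadratic `f`, under bounded linear regularity of
the collections `{F_x, C}`. -/
theorem stmt_13 {n p : ℕ} (hp : 0 < p) (f : EuclideanSpace ℝ (Fin n) → ℝ)
    (α : ℝ) (hα : 0 < α)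
    (hconv : ConvexOn ℝ Set.univ f)
    (hsc : ∀ x y xs : EuclideanSpace ℝ (Fin n),
      (∀ z, f x + ⟪xs, z - x⟫ ≤ f z) →
      f x + ⟪xs, y - x⟫ + α / 2 * ‖y - x‖ ^ 2 ≤ f y)
    (F : Fin p → Set (EuclideanSpace ℝ (Fin n)))
    (hcover : (⋃ i, F i) = Set.univ)
    (hpoly : ∀ i, ∃ (k : ℕ) (c : Fin k → EuclideanSpace ℝ (Fin n)) (d : Fin k → ℝ),
      F i = {x : EuclideanSpace ℝ (Fin n) | ∀ j, ⟪c j, x⟫ ≤ d j})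
    (Aq : Fin p → (EuclideanSpace ℝ (Fin n) →ₗ[ℝ] EuclideanSpace ℝ (Fin n)))
    (hsym : ∀ i, ∀ x y : EuclideanSpace ℝ (Fin n), ⟪Aq i x, y⟫ = ⟪x, Aq i y⟫)
    (hpsd : ∀ i, ∀ x : EuclideanSpace ℝ (Fin n), 0 ≤ ⟪x, Aq i x⟫)
    (a : Fin p → EuclideanSpace ℝ (Fin n)) (c : Fin p → ℝ)
    (hf : ∀ i, ∀ x ∈ F i, f x = 1 / 2 * ⟪x, Aq i x⟫ + ⟪a i, x⟫ + c i)
    (Fx : EuclideanSpace ℝ (Fin n) → Set (EuclideanSpace ℝ (Fin n)))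
    (hFx : ∀ x, Fx x = ⋂ i ∈ {i : Fin p | x ∈ F i}, F i)
    (C : Set (EuclideanSpace ℝ (Fin n))) (hCne : C.Nonempty) (hCc : IsClosed C)
    (hCconv : Convex ℝ C)
    (hreg : ∀ x : EuclideanSpace ℝ (Fin n), (Fx x ∩ C).Nonempty →
      ∀ R > (0 : ℝ), ∃ γ > (0 : ℝ), ∀ z : EuclideanSpace ℝ (Fin n), ‖z‖ ≤ R →
        Metric.infDist z (Fx x ∩ C) ^ 2 ≤
          γ * (Metric.infDist z (Fx x) ^ 2 + Metric.infDist z C ^ 2)) :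
    ∀ R > (0 : ℝ), ∃ L > (0 : ℝ), ∀ x : EuclideanSpace ℝ (Fin n), ‖x‖ ≤ R →
      ∀ xs : EuclideanSpace ℝ (Fin n), (∀ z, f x + ⟪xs, z - x⟫ ≤ f z) →
        sInf ((fun y => f y - f x - ⟪xs, y - x⟫) '' C) ≤
          L * Metric.infDist x C ^ 2 := by
  classical
  intro R hR
  have hFc : ∀ i, IsClosed (F i) := fun i => aux_closed _ (hpoly i)
  -- operator norm bound
  set β : ℝ := ∑ i, ‖LinearMap.toContinuousLinearMap (Aq i)‖ with hβdef
  have hβ0 : 0 ≤ β := Finset.sum_nonneg fun i _ => norm_nonneg _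
  have hβn : ∀ i (v : EuclideanSpace ℝ (Fin n)), ‖Aq i v‖ ≤ β * ‖v‖ := by
    intro i v
    have h1 : ‖Aq i v‖ = ‖LinearMap.toContinuousLinearMap (Aq i) v‖ := rfl
    have h2 := (LinearMap.toContinuousLinearMap (Aq i)).le_opNorm v
    have h3 : ‖LinearMap.toContinuousLinearMap (Aq i)‖ ≤ β :=
      Finset.single_le_sum (f := fun i => ‖LinearMap.toContinuousLinearMap (Aq i)‖)
        (fun j _ => norm_nonneg _) (Finset.mem_univ i)
    rw [h1]
    exact h2.trans (mul_le_mul_of_nonneg_right h3 (norm_nonneg v))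
  have hβq : ∀ i (v : EuclideanSpace ℝ (Fin n)), ⟪v, Aq i v⟫ ≤ β * ‖v‖^2 := by
    intro i v
    have h1 := real_inner_le_norm v (Aq i v)
    have h2 := hβn i v
    nlinarith [norm_nonneg v, norm_nonneg (Aq i v)]
  set A' : ℝ := ∑ i, ‖a i‖ with hA'def
  have hA'b : ∀ i, ‖a i‖ ≤ A' :=
    fun i => Finset.single_le_sum (f := fun i => ‖a i‖) (fun j _ => norm_nonneg _) (Finset.mem_univ i)
  have hA'0 : 0 ≤ A' := Finset.sum_nonneg fun i _ => norm_nonneg _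
  set C' : ℝ := ∑ i, |c i| with hC'def
  have hC'b : ∀ i, |c i| ≤ C' :=
    fun i => Finset.single_le_sum (f := fun i => |c i|) (fun j _ => abs_nonneg _) (Finset.mem_univ i)
  have hC'0 : 0 ≤ C' := Finset.sum_nonneg fun i _ => abs_nonneg _
  obtain ⟨c0, hc0⟩ := hCne
  set r1 : ℝ := 2 * R + ‖c0‖ + 1 with hr1def
  have hr1 : 0 ≤ r1 := by have := norm_nonneg c0; simp only [hr1def]; linarith
  have hRr1 : R + 1 ≤ r1 := by have := norm_nonneg c0; simp only [hr1def]; linarith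
  set M1 : ℝ := β / 2 * r1^2 + A' * r1 + C' + 1 with hM1def
  have hM1pos : (1:ℝ) ≤ M1 := by
    have h1 : 0 ≤ β / 2 * r1^2 := by positivity
    have h2 : 0 ≤ A' * r1 := mul_nonneg hA'0 hr1
    simp only [hM1def]; nlinarith [h1, h2, hC'0]
  have hfb : ∀ z : EuclideanSpace ℝ (Fin n), ‖z‖ ≤ r1 → |f z| ≤ M1 := by
    intro z hz
    have := aux_fb f F hcover Aq a c hf β A' C' r1 hβ0 hr1 hβn hA'b hC'b z hz
    simp only [hM1def]; linarith
  -- subgradient norm bound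
  have hxsb : ∀ x xs : EuclideanSpace ℝ (Fin n), ‖x‖ ≤ R →
      (∀ z, f x + ⟪xs, z - x⟫ ≤ f z) → ‖xs‖ ≤ 2 * M1 := by
    intro x xs hx hxs
    rcases eq_or_ne xs 0 with h | h
    · rw [h, norm_zero]; linarith
    · have hn : (0:ℝ) < ‖xs‖ := norm_pos_iff.2 h
      set u : EuclideanSpace ℝ (Fin n) := ‖xs‖⁻¹ • xs with hu
      have hun : ‖u‖ = 1 := by
        simp only [hu, norm_smul, norm_inv, norm_norm]
        field_simp
      have hinner : ⟪xs, u⟫ = ‖xs‖ := by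
        simp only [hu, real_inner_smul_right, real_inner_self_eq_norm_sq]
        field_simp
      have hsub := hxs (x + u)
      have hz : x + u - x = u := by abel
      rw [hz, hinner] at hsub
      have h1 : ‖x + u‖ ≤ r1 := by
        have := norm_add_le x u
        rw [hun] at this
        linarith
      have h2 : ‖x‖ ≤ r1 := by linarith
      have h3 := hfb _ h1
      have h4 := hfb _ h2
      have h5 := abs_le.1 h3
      have h6 := abs_le.1 h4
      linarith
  set Md : ℝ := 2 * M1 + 2 * M1 * (R + ‖c0‖) with hMddef
  have hMd0 : 0 ≤ Md := by
    have := norm_nonneg c0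
    have : 0 ≤ 2 * M1 * (R + ‖c0‖) := by nlinarith [norm_nonneg c0]
    simp only [hMddef]; linarith
  -- pieces indexed by finsets
  set T : Finset (Fin p) → Set (EuclideanSpace ℝ (Fin n)) := fun s => ⋂ i ∈ s, F i with hT
  set Sx : EuclideanSpace ℝ (Fin n) → Finset (Fin p) :=
    fun x => Finset.univ.filter (fun i => x ∈ F i) with hSx
  have hFxT : ∀ x, Fx x = T (Sx x) := by
    intro x
    rw [hFx]
    ext z
    simp [hT, hSx, Set.mem_iInter]
  have hTclosed : ∀ s, IsClosed (T s) := fun s => isClosed_biInter fun i _ => hFc i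
  have hxT : ∀ x, x ∈ T (Sx x) := by
    intro x
    simp [hT, hSx, Set.mem_iInter]
  have hTsub : ∀ (x : EuclideanSpace ℝ (Fin n)) i, x ∈ F i → T (Sx x) ⊆ F i := by
    intro x i hi z hz
    simp only [hT, Set.mem_iInter] at hz
    exact hz i (by simp [hSx, hi])
  -- γ machinery
  set P : Finset (Fin p) → Prop := fun s => ∃ γ, 0 < γ ∧
    ∀ z : EuclideanSpace ℝ (Fin n), ‖z‖ ≤ R →
      Metric.infDist z (T s ∩ C) ^ 2 ≤ γ * (Metric.infDist z (T s) ^ 2 + Metric.infDist z C ^ 2)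
    with hP
  set γf : Finset (Fin p) → ℝ := fun s => if h : P s then h.choose else 1 with hγf
  have hγspec : ∀ s, P s → 0 < γf s ∧
      ∀ z : EuclideanSpace ℝ (Fin n), ‖z‖ ≤ R →
        Metric.infDist z (T s ∩ C) ^ 2 ≤ γf s * (Metric.infDist z (T s) ^ 2 + Metric.infDist z C ^ 2) := by
    intro s hs
    simp only [hγf, dif_pos hs]
    exact hs.choose_spec
  have hγpos : ∀ s, 0 < γf s := by
    intro s
    by_cases hs : P s
    · exact (hγspec s hs).1
    · simp only [hγf, dif_neg hs]; norm_num
  set Γ : ℝ := ∑ s : Finset (Fin p), γf s with hΓ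
  have hγleΓ : ∀ s, γf s ≤ Γ :=
    fun s => Finset.single_le_sum (f := γf) (fun t _ => (hγpos t).le) (Finset.mem_univ s)
  have hΓpos : 0 < Γ := Finset.sum_pos (fun s _ => hγpos s) Finset.univ_nonempty
  -- δ machinery
  set Q : Finset (Fin p) → Prop := fun s => ∃ δ, 0 < δ ∧
    ∀ z ∈ T s ∩ Metric.closedBall (0 : EuclideanSpace ℝ (Fin n)) R, δ ≤ Metric.infDist z C
    with hQdef
  have hQ : ∀ s, T s ∩ C = ∅ → Q s :=
    fun s hs => aux_delta (T s) C (hTclosed s) hCc ⟨c0, hc0⟩ hs R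
  set δf : Finset (Fin p) → ℝ := fun s => if h : Q s then h.choose else 1 with hδf
  have hδspec : ∀ s, Q s → 0 < δf s ∧
      ∀ z ∈ T s ∩ Metric.closedBall (0 : EuclideanSpace ℝ (Fin n)) R, δf s ≤ Metric.infDist z C := by
    intro s hs
    simp only [hδf, dif_pos hs]
    exact hs.choose_spec
  have hδpos : ∀ s, 0 < δf s := by
    intro s
    by_cases hs : Q s
    · exact (hδspec s hs).1
    · simp only [hδf, dif_neg hs]; norm_num
  have hune : (Finset.univ : Finset (Finset (Fin p))).Nonempty := Finset.univ_nonempty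
  set δ : ℝ := Finset.univ.inf' hune δf with hδdef
  have hδ0 : 0 < δ := (Finset.lt_inf'_iff hune).2 fun s _ => hδpos s
  have hδle : ∀ s, δ ≤ δf s := fun s => Finset.inf'_le _ (Finset.mem_univ s)
  -- the constant
  set L : ℝ := β * Γ / 2 + Md / δ^2 + 1 with hL
  have hL1 : 0 ≤ β * Γ / 2 := div_nonneg (mul_nonneg hβ0 hΓpos.le) (by norm_num)
  have hL2 : 0 ≤ Md / δ^2 := div_nonneg hMd0 (sq_nonneg δ)
  have hLpos : 0 < L := by simp only [hL]; linarith
  refine ⟨L, hLpos, ?_⟩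
  intro x hx xs hxs
  have hd0 : 0 ≤ Metric.infDist x C := Metric.infDist_nonneg
  have hbdd : BddBelow ((fun y => f y - f x - ⟪xs, y - x⟫) '' C) := by
    refine ⟨0, ?_⟩
    rintro v ⟨y, hy, rfl⟩
    have := hxs y
    simp only
    linarith
  by_cases hne : (Fx x ∩ C).Nonempty
  · -- regular case
    have hne' : (T (Sx x) ∩ C).Nonempty := hFxT x ▸ hne
    have hPs : P (Sx x) := by
      obtain ⟨γ, hγ, hprop⟩ := hreg x hne R hR
      exact ⟨γ, hγ, by rw [← hFxT x]; exact hprop⟩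
    obtain ⟨hγp, hγprop⟩ := hγspec _ hPs
    have hclosed : IsClosed (T (Sx x) ∩ C) := (hTclosed _).inter hCc
    obtain ⟨y, hyTC, hdy⟩ := hclosed.exists_infDist_eq_dist hne' x
    have hyC : y ∈ C := hyTC.2
    have hyF : ∀ i, x ∈ F i → y ∈ F i := fun i hi => hTsub x i hi hyTC.1
    have hD := aux_key f F hcover hFc Aq hsym a c hf x y xs hxs hyF β hβq
    have hsinf : sInf ((fun y => f y - f x - ⟪xs, y - x⟫) '' C) ≤ f y - f x - ⟪xs, y - x⟫ :=
      csInf_le hbdd ⟨y, hyC, rfl⟩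
    have hzero : Metric.infDist x (T (Sx x)) = 0 := Metric.infDist_zero_of_mem (hxT x)
    have hreg' := hγprop x hx
    rw [hzero] at hreg'
    have hnorm : ‖y - x‖^2 ≤ γf (Sx x) * Metric.infDist x C ^ 2 := by
      have h1 : ‖y - x‖ = Metric.infDist x (T (Sx x) ∩ C) := by
        rw [hdy, dist_eq_norm, norm_sub_rev]
      rw [h1]
      calc Metric.infDist x (T (Sx x) ∩ C) ^ 2
          ≤ γf (Sx x) * (0 ^ 2 + Metric.infDist x C ^ 2) := hreg'
        _ = γf (Sx x) * Metric.infDist x C ^ 2 := by ring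
    calc sInf ((fun y => f y - f x - ⟪xs, y - x⟫) '' C) ≤ f y - f x - ⟪xs, y - x⟫ := hsinf
      _ ≤ β / 2 * ‖y - x‖^2 := hD
      _ ≤ β / 2 * (γf (Sx x) * Metric.infDist x C ^ 2) := by nlinarith
      _ = β / 2 * γf (Sx x) * Metric.infDist x C ^ 2 := by ring
      _ ≤ L * Metric.infDist x C ^ 2 := by
          have h1 := hγleΓ (Sx x)
          have h3 : 0 ≤ Metric.infDist x C ^ 2 := sq_nonneg _
          refine mul_le_mul_of_nonneg_right ?_ h3
          have h4 : β / 2 * γf (Sx x) ≤ β / 2 * Γ :=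
            mul_le_mul_of_nonneg_left h1 (by linarith)
          have h5 : β / 2 * Γ = β * Γ / 2 := by ring
          simp only [hL]
          linarith [hL2]
  · -- empty intersection case
    have hTC : T (Sx x) ∩ C = ∅ := by
      rw [← hFxT]; exact Set.not_nonempty_iff_eq_empty.1 hne
    obtain ⟨hδp, hδprop⟩ := hδspec _ (hQ _ hTC)
    have hxK : x ∈ T (Sx x) ∩ Metric.closedBall (0 : EuclideanSpace ℝ (Fin n)) R :=
      ⟨hxT x, by simpa [Metric.mem_closedBall, dist_zero_right] using hx⟩
    have hdl : δ ≤ Metric.infDist x C := le_trans (hδle _) (hδprop x hxK)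
    obtain ⟨w, hwC, hdw⟩ := hCc.exists_infDist_eq_dist ⟨c0, hc0⟩ x
    have hdist_le : Metric.infDist x C ≤ R + ‖c0‖ := by
      have h1 := Metric.infDist_le_dist_of_mem (x := x) hc0
      have h2 : dist x c0 ≤ ‖x‖ + ‖c0‖ := by
        rw [dist_eq_norm]; exact norm_sub_le x c0
      linarith
    have hwx : ‖w - x‖ = Metric.infDist x C := by
      rw [hdw, dist_eq_norm]
      exact norm_sub_rev w x
    have hwnorm : ‖w‖ ≤ r1 := by
      have h1 : ‖w‖ ≤ ‖x‖ + ‖w - x‖ := by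
        calc ‖w‖ = ‖x + (w - x)‖ := by congr 1; abel
          _ ≤ ‖x‖ + ‖w - x‖ := norm_add_le _ _
      rw [hwx] at h1
      have := norm_nonneg c0
      simp only [hr1def]
      linarith
    have hfx := abs_le.1 (hfb x (hx.trans (by linarith)))
    have hfw := abs_le.1 (hfb w hwnorm)
    have hxsn := hxsb x xs hx hxs
    have hip : |⟪xs, w - x⟫| ≤ ‖xs‖ * ‖w - x‖ := abs_real_inner_le_norm xs (w - x)
    have hDw : f w - f x - ⟪xs, w - x⟫ ≤ Md := by
      have h1 : ‖xs‖ * ‖w - x‖ ≤ 2 * M1 * (R + ‖c0‖) := by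
        have h2 : 0 ≤ ‖w - x‖ := norm_nonneg _
        have h3 : ‖w - x‖ ≤ R + ‖c0‖ := hwx ▸ hdist_le
        nlinarith [norm_nonneg xs]
      have h4 := abs_le.1 hip
      simp only [hMddef]
      linarith
    have hsinf : sInf ((fun y => f y - f x - ⟪xs, y - x⟫) '' C) ≤ f w - f x - ⟪xs, w - x⟫ :=
      csInf_le hbdd ⟨w, hwC, rfl⟩
    have hsq : δ^2 ≤ Metric.infDist x C ^ 2 := by nlinarith
    calc sInf ((fun y => f y - f x - ⟪xs, y - x⟫) '' C) ≤ f w - f x - ⟪xs, w - x⟫ := hsinf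
      _ ≤ Md := hDw
      _ = Md / δ^2 * δ^2 := (div_mul_cancel₀ Md (ne_of_gt (pow_pos hδ0 2))).symm
      _ ≤ Md / δ^2 * Metric.infDist x C ^ 2 := mul_le_mul_of_nonneg_left hsq hL2
      _ ≤ L * Metric.infDist x C ^ 2 := by
          have h3 : 0 ≤ Metric.infDist x C ^ 2 := sq_nonneg _
          refine mul_le_mul_of_nonneg_right ?_ h3
          simp only [hL]
          linarith [hL1]
end

section
/- Let f: ℝⁿ → ℝ be α-strongly convex. Then the convex conjugate f* is everywhere differentiable and ∇f* is (1/α)-Lipschitz continuous: ‖∇f*(x*) − ∇f*(y*)‖ ≤ (1/α)‖x* − y*‖ for all x*, y* ∈ ℝⁿ. -/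
/-!
Strong convexity makes `z ↦ ⟪w, z⟫ - f z` coercive, so the supremum defining `f* w` is attained
at some `g w`, and `w` is then a subgradient of `f` at `g w`. Adding the strong convexity
inequalities at `g w` and `g v` gives `α ‖g w - g v‖² ≤ ⟪w - v, g w - g v⟫`, whence the
`1/α`-Lipschitz bound. Fenchel–Young sandwiches `f* x - f* w - ⟪g w, x - w⟫` between `0` and
`⟪x - w, g x - g w⟫ ≤ ‖x - w‖² / α`, so `g w` is the gradient of `f*` at `w`.
-/

open RealInnerProductSpace Set Filter

section StrongDual

variable {E : Type*} [NormedAddCommGroup E] [NormedSpace ℝ E] {f : E → ℝ}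

theorem ConvexOn.exists_strongDual_le (hf : ConvexOn ℝ univ f) (hcont : Continuous f) (x : E) :
    ∃ ℓ : StrongDual ℝ E, ∀ z, f x + ℓ (z - x) ≤ f z := by
  have hS : IsOpen {p : E × ℝ | p.1 ∈ univ ∧ f p.1 < p.2} := by
    simpa using isOpen_lt (hcont.comp continuous_fst) continuous_snd
  -- The functional separating `(x, f x)` from the strict epigraph has negative vertical slope
  -- `c`; its horizontal part, rescaled by `-1 / c`, is the required `ℓ`.
  obtain ⟨L, hL⟩ := geometric_hahn_banach_open_point hf.convex_strict_epigraph hS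
    (x := (x, f x)) (by simp)
  set c := L (0, 1)
  have hsplit : ∀ z t, L (z, t) - L (x, f x) = L (z - x, 0) + (t - f x) * c := by
    intro z t
    rw [← map_sub, show (z, t) - (x, f x) = (z - x, 0) + (t - f x) • ((0 : E), (1 : ℝ)) by
      ext <;> simp, map_add, map_smul, smul_eq_mul]
  have hlt : ∀ z t, f z < t → L (z - x, 0) + (t - f x) * c < 0 := fun z t h => by
    linarith [hsplit z t, hL (z, t) ⟨mem_univ z, h⟩]
  have hc : c < 0 := by simpa [Prod.mk_zero_zero] using hlt x (f x + 1) (by linarith)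
  have hle : ∀ z, L (z - x, 0) + (f z - f x) * c ≤ 0 := by
    intro z
    refine le_of_forall_pos_lt_add fun δ hδ => ?_
    have := hlt z (f z + δ / -c) (by have := div_pos hδ (neg_pos.2 hc); linarith)
    have hδc : δ / -c * c = -δ := by field_simp [hc.ne]
    nlinarith
  refine ⟨(-c⁻¹) • L.comp (ContinuousLinearMap.inl ℝ E ℝ), fun z => ?_⟩
  have hz := hle z
  simp only [FunLike.coe_smul, Pi.smul_apply, ContinuousLinearMap.comp_apply,
    ContinuousLinearMap.inl_apply, smul_eq_mul]
  have : -c⁻¹ * L (z - x, 0) ≤ f z - f x := by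
    rw [neg_mul, neg_le, ← div_eq_inv_mul, le_div_iff_of_neg hc]
    linarith
  linarith

end StrongDual

section Subgradient

variable {E : Type*} [NormedAddCommGroup E] [InnerProductSpace ℝ E]

def IsSubgradient (f : E → ℝ) (x s : E) : Prop :=
  ∀ z, f x + ⟪s, z - x⟫ ≤ f z

variable {f : E → ℝ} {x u v w y s : E}

theorem isSubgradient_iff_inner_sub_le :
    IsSubgradient f x s ↔ ∀ z, ⟪s, z⟫ - f z ≤ ⟪s, x⟫ - f x := by
  refine forall_congr' fun z => ?_
  rw [inner_sub_right]
  constructor <;> intro h <;> linarith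

theorem IsSubgradient.iSup_inner_sub_eq (h : IsSubgradient f x s) :
    ⨆ z, (⟪s, z⟫ - f z) = ⟪s, x⟫ - f x :=
  have hle := isSubgradient_iff_inner_sub_le.1 h
  le_antisymm (ciSup_le hle) (le_ciSup ⟨_, forall_mem_range.2 hle⟩ x)

theorem ConvexOn.exists_isSubgradient [CompleteSpace E] (hf : ConvexOn ℝ univ f)
    (hcont : Continuous f) (x : E) : ∃ s, IsSubgradient f x s := by
  obtain ⟨ℓ, hℓ⟩ := hf.exists_strongDual_le hcont x
  refine ⟨(InnerProductSpace.toDual ℝ E).symm ℓ, fun z => ?_⟩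
  simpa [InnerProductSpace.toDual_symm_apply] using hℓ z

-- By `IsSubgradient.iSup_inner_sub_eq`, `⟪x, v⟫ - f v` is the conjugate `f* x`: this brackets the
-- first-order remainder of `f*` at `w`.
theorem IsSubgradient.conj_sub_conj_sub_inner_mem_Icc (hu : IsSubgradient f u w)
    (hv : IsSubgradient f v x) :
    (⟪x, v⟫ - f v) - (⟪w, u⟫ - f u) - ⟪u, x - w⟫ ∈ Icc 0 ⟪x - w, v - u⟫ := by
  have h₁ := isSubgradient_iff_inner_sub_le.1 hv u
  have h₂ := isSubgradient_iff_inner_sub_le.1 hu v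
  simp only [inner_sub_left, inner_sub_right, real_inner_comm u] at h₁ h₂ ⊢
  constructor <;> linarith

end Subgradient

section Gradient

variable {E : Type*} [NormedAddCommGroup E] [InnerProductSpace ℝ E] [CompleteSpace E]

theorem hasGradientAt_of_abs_sub_inner_le {φ : E → ℝ} {g w : E} {C : ℝ}
    (h : ∀ x, |φ x - φ w - ⟪g, x - w⟫| ≤ C * ‖x - w‖ ^ 2) : HasGradientAt φ g w := by
  rw [hasGradientAt_iff_hasFDerivAt, hasFDerivAt_iff_isLittleO]
  refine Asymptotics.IsBigO.trans_isLittleO (.of_bound C (Eventually.of_forall fun x => ?_))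
    (Asymptotics.isLittleO_pow_sub_sub w one_lt_two)
  simpa using h x

theorem hasGradientAt_of_isSubgradient {f φ : E → ℝ} {g : E → E} {w : E} {K : ℝ}
    (hg : ∀ x, IsSubgradient f (g x) x) (hφ : ∀ x, φ x = ⟪x, g x⟫ - f (g x))
    (hK : ∀ x, ‖g x - g w‖ ≤ K * ‖x - w‖) : HasGradientAt φ (g w) w := by
  refine hasGradientAt_of_abs_sub_inner_le (C := K) fun x => ?_
  obtain ⟨hlow, hupp⟩ := (hg w).conj_sub_conj_sub_inner_mem_Icc (hg x)
  rw [hφ, hφ, abs_of_nonneg hlow]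
  calc _ ≤ ⟪x - w, g x - g w⟫ := hupp
    _ ≤ ‖x - w‖ * ‖g x - g w‖ := real_inner_le_norm _ _
    _ ≤ ‖x - w‖ * (K * ‖x - w‖) := by gcongr; exact hK x
    _ = K * ‖x - w‖ ^ 2 := by ring

end Gradient

section StrongConvexity

variable {E : Type*} [NormedAddCommGroup E] [InnerProductSpace ℝ E]

def StronglyConvexViaSubgradients (α : ℝ) (f : E → ℝ) : Prop :=
  ∀ x y s, IsSubgradient f x s → f x + ⟪s, y - x⟫ + α / 2 * ‖y - x‖ ^ 2 ≤ f y

variable {f : E → ℝ} {α : ℝ} {u v w y : E}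

theorem StronglyConvexViaSubgradients.mul_norm_sq_le_inner
    (hf : StronglyConvexViaSubgradients α f) (hu : IsSubgradient f u w) (hv : IsSubgradient f v y) :
    α * ‖u - v‖ ^ 2 ≤ ⟪w - y, u - v⟫ := by
  have h₁ := hf u v w hu
  have h₂ := hf v u y hv
  rw [norm_sub_rev v u, ← neg_sub u v, inner_neg_right] at h₁
  rw [inner_sub_left]
  linarith

theorem StronglyConvexViaSubgradients.norm_sub_le (hf : StronglyConvexViaSubgradients α f)
    (hα : 0 < α) (hu : IsSubgradient f u w) (hv : IsSubgradient f v y) :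
    ‖u - v‖ ≤ 1 / α * ‖w - y‖ := by
  have h := (hf.mul_norm_sq_le_inner hu hv).trans (real_inner_le_norm _ _)
  rw [one_div, inv_mul_eq_div, le_div_iff₀ hα]
  rcases (norm_nonneg (u - v)).eq_or_lt with h0 | h0
  · rw [← h0, zero_mul]; positivity
  · nlinarith

theorem StronglyConvexViaSubgradients.exists_isSubgradient [FiniteDimensional ℝ E]
    (hf : StronglyConvexViaSubgradients α f) (hconv : ConvexOn ℝ univ f) (hα : 0 < α) (w : E) :
    ∃ u, IsSubgradient f u w := by
  have hcont : Continuous f := hconv.locallyLipschitz.continuous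
  obtain ⟨s₀, hs₀⟩ := hconv.exists_isSubgradient hcont 0
  have hquad : Tendsto (fun r => f 0 + r * (α / 2 * r - ‖w - s₀‖)) atTop atTop :=
    tendsto_atTop_add_const_left _ _ (tendsto_id.atTop_mul_atTop₀
      (tendsto_atTop_add_const_right _ _ (tendsto_id.const_mul_atTop (half_pos hα))))
  have hcoercive : Tendsto (fun z => f z - ⟪w, z⟫) (cocompact E) atTop := by
    refine tendsto_atTop_mono (fun z => ?_) (hquad.comp tendsto_norm_cocompact_atTop)
    have h₁ := hf 0 z s₀ hs₀
    have h₂ := real_inner_le_norm (w - s₀) z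
    simp only [sub_zero, inner_sub_left] at h₁ h₂
    simp only [Function.comp_apply]
    nlinarith
  obtain ⟨u, hu⟩ := (show Continuous fun z => f z - ⟪w, z⟫ by fun_prop).exists_forall_le hcoercive
  exact ⟨u, isSubgradient_iff_inner_sub_le.2 fun z => by linarith [hu z]⟩

end StrongConvexity

/-- the conjugate of an α-strongly convex function is differentiable
with a (1/α)-Lipschitz-continuous gradient. -/
theorem stmt_14 {n : ℕ} (f : EuclideanSpace ℝ (Fin n) → ℝ) (α : ℝ) (hα : 0 < α)
    (hconv : ConvexOn ℝ Set.univ f)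
    (hsc : ∀ x y xs : EuclideanSpace ℝ (Fin n),
      (∀ z, f x + ⟪xs, z - x⟫ ≤ f z) →
      f x + ⟪xs, y - x⟫ + α / 2 * ‖y - x‖ ^ 2 ≤ f y)
    (fstar : EuclideanSpace ℝ (Fin n) → ℝ)
    (hfstar : ∀ w, fstar w = ⨆ z : EuclideanSpace ℝ (Fin n), (⟪w, z⟫ - f z)) :
    ∃ g : EuclideanSpace ℝ (Fin n) → EuclideanSpace ℝ (Fin n),
      (∀ w, HasGradientAt fstar (g w) w) ∧
      (∀ w v : EuclideanSpace ℝ (Fin n), ‖g w - g v‖ ≤ (1 / α) * ‖w - v‖) := by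
  have hf : StronglyConvexViaSubgradients α f := hsc
  choose g hg using hf.exists_isSubgradient hconv hα
  have hval (w) : fstar w = ⟪w, g w⟫ - f (g w) := (hfstar w).trans (hg w).iSup_inner_sub_eq
  have hlip (w v) : ‖g w - g v‖ ≤ 1 / α * ‖w - v‖ := hf.norm_sub_le hα (hg w) (hg v)
  exact ⟨g, fun w => hasGradientAt_of_isSubgradient hg hval (hlip · w), hlip⟩
end

section
/- Let f: ℝⁿ → ℝ be α-strongly convex, A ∈ ℝ^{m×n} with full row rank, b ∈ ℝᵐ, x ∈ ℝⁿ and x* ∈ ∂f(x). Let x̂ = ∇f*(x* − Aᵀŵ) where ŵ minimizes w ↦ f*(x* − Aᵀw) + ⟨w, b⟩, and set x̂* := x* − Aᵀŵ. Then x̂ ∈ L(A,b) := {y : Ay = b}, x̂* ∈ ∂f(x̂), and for all y ∈ L(A,b): D_f^{x̂*}(x̂, y) ≤ D_f^{x*}(x, y) − (α/2)·‖(AAᵀ)^{−1/2}(Ax − b)‖². -/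
/-!
By the Fenchel–Young equality, a subgradient pair `(u, w)` of `f` gives `f*(w) = ⟪w, u⟫ - f u`,
and `α`-strong convexity makes `f*` smooth: `f*(z) ≤ f*(w) + ⟪u, z - w⟫ + ‖z - w‖² / (2α)`.
Since `f - ⟪v, ·⟫` is coercive it attains its minimum, so every `v` is a subgradient at some
point, and differentiability of `f*` at `v` forces that point to be `∇f*(v)`. First-order
optimality of `ŵ` gives `A x̂ = b`. Finally `D_f^{w}(u, y) = f y - ⟪w, y⟫ + f*(w)`, so for
`A y = b` the Bregman decrease is the dual decrease `f*(x*) - f*(x̂*) - ⟪ŵ, b⟫`; comparing `ŵ`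
with the trial point `α (AAᵀ)⁻¹ (A x - b)` and using smoothness bounds it below by
`α/2 ‖S (A x - b)‖²`.
-/

open RealInnerProductSpace

section Conjugate

variable {E : Type*} [NormedAddCommGroup E] [InnerProductSpace ℝ E]

def HasSubgradientAt (f : E → ℝ) (w u : E) : Prop :=
  ∀ z, f u + ⟪w, z - u⟫ ≤ f z

/-- The supremum is the junk value `0` when unbounded, which cannot happen once `f` is strongly
convex and has a subgradient somewhere. -/
noncomputable def fenchelConj (f : E → ℝ) (z : E) : ℝ :=
  ⨆ y, ⟪z, y⟫ - f y

/-- `bregmanDiv f w u y` is the paper's `D_f^{w}(u, y)`. -/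
def bregmanDiv (f : E → ℝ) (w u y : E) : ℝ :=
  f y - f u - ⟪w, y - u⟫

theorem inner_sub_mul_norm_sq_le {α : ℝ} (hα : 0 < α) (c d : E) :
    ⟪c, d⟫ - α / 2 * ‖d‖ ^ 2 ≤ ‖c‖ ^ 2 / (2 * α) := by
  rw [le_div_iff₀ (by positivity)]
  nlinarith [sq_nonneg (α * ‖d‖ - ‖c‖), real_inner_le_norm c d]

variable {f : E → ℝ} {w u : E}

theorem fenchelConj_eq_of_hasSubgradientAt (hu : HasSubgradientAt f w u) :
    fenchelConj f w = ⟪w, u⟫ - f u := by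
  have hle : ∀ y, ⟪w, y⟫ - f y ≤ ⟪w, u⟫ - f u := fun y => by
    have := hu y
    rw [inner_sub_right] at this
    linarith
  exact le_antisymm (ciSup_le hle) (le_ciSup ⟨_, Set.forall_mem_range.2 hle⟩ u)

theorem bregmanDiv_eq_of_hasSubgradientAt (hu : HasSubgradientAt f w u) (y : E) :
    bregmanDiv f w u y = f y - ⟪w, y⟫ + fenchelConj f w := by
  rw [bregmanDiv, fenchelConj_eq_of_hasSubgradientAt hu, inner_sub_right]
  ring

variable {α : ℝ} (hα : 0 < α)
  (hsc : ∀ x y xs, HasSubgradientAt f xs x → f x + ⟪xs, y - x⟫ + α / 2 * ‖y - x‖ ^ 2 ≤ f y)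
include hα hsc

theorem inner_sub_le_of_hasSubgradientAt (hu : HasSubgradientAt f w u) (z y : E) :
    ⟪z, y⟫ - f y ≤ ⟪z, u⟫ - f u + ‖z - w‖ ^ 2 / (2 * α) := by
  have hy := hsc u y w hu
  have hmix := inner_sub_mul_norm_sq_le hα (z - w) (y - u)
  have hexp : ⟪z - w, y - u⟫ = ⟪z, y⟫ - ⟪z, u⟫ - ⟪w, y - u⟫ := by
    simp only [inner_sub_left, inner_sub_right]; ring
  linarith

theorem inner_sub_le_fenchelConj (hu : HasSubgradientAt f w u) (z y : E) :
    ⟪z, y⟫ - f y ≤ fenchelConj f z :=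
  le_ciSup ⟨_, Set.forall_mem_range.2 (inner_sub_le_of_hasSubgradientAt hα hsc hu z)⟩ y

theorem fenchelConj_le_of_hasSubgradientAt (hu : HasSubgradientAt f w u) (z : E) :
    fenchelConj f z ≤ fenchelConj f w + ⟪u, z - w⟫ + ‖z - w‖ ^ 2 / (2 * α) := by
  rw [fenchelConj_eq_of_hasSubgradientAt hu, inner_sub_right, real_inner_comm z u,
    real_inner_comm w u]
  exact ciSup_le fun y => by linarith [inner_sub_le_of_hasSubgradientAt hα hsc hu z y]

theorem exists_hasSubgradientAt [FiniteDimensional ℝ E] (hf : Continuous f)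
    (hu : HasSubgradientAt f w u) (v : E) : ∃ p, HasSubgradientAt f v p := by
  set R := 2 * ‖w - v‖ / α
  have hcoercive : ∀ z, R ≤ ‖z - u‖ → f u - ⟪v, u⟫ ≤ f z - ⟪v, z⟫ := fun z hz => by
    have hz' : 2 * ‖w - v‖ ≤ α * ‖z - u‖ := by rwa [div_le_iff₀' hα] at hz
    have hcs := real_inner_le_norm (w - v) (u - z)
    have hexp : ⟪w - v, u - z⟫ = ⟪v, z⟫ - ⟪v, u⟫ - ⟪w, z - u⟫ := by
      simp only [inner_sub_left, inner_sub_right]; ring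
    rw [norm_sub_rev u z] at hcs
    nlinarith [hsc u z w hu, mul_nonneg (norm_nonneg (z - u)) (sub_nonneg.2 hz')]
  have hfar : ∀ᶠ z in Filter.cocompact E, f u - ⟪v, u⟫ ≤ f z - ⟪v, z⟫ :=
    Filter.mem_of_superset (isCompact_closedBall u R).compl_mem_cocompact fun z hz =>
      hcoercive z (by
        rw [Set.mem_compl_iff, Metric.mem_closedBall, dist_eq_norm, not_le] at hz; exact hz.le)
  obtain ⟨p, hp⟩ := (hf.sub (continuous_const.inner continuous_id)).exists_forall_le'
    (f := fun z => f z - ⟪v, z⟫) u hfar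
  refine ⟨p, fun z => ?_⟩
  have := hp z
  simp only [inner_sub_right] at this ⊢
  linarith

theorem eq_of_hasGradientAt_fenchelConj [CompleteSpace E] {v p q : E}
    (hp : HasSubgradientAt f v p) (hq : HasGradientAt (fenchelConj f) q v) : q = p := by
  have hmin : IsLocalMin (fun z => fenchelConj f z - ⟪p, z⟫) v :=
    Filter.Eventually.of_forall fun z => by
      have := inner_sub_le_fenchelConj hα hsc hp z p
      simp only [fenchelConj_eq_of_hasSubgradientAt hp, real_inner_comm p] at this ⊢
      linarith
  have h0 := hmin.hasFDerivAt_eq_zero (hq.hasFDerivAt.sub (innerSL ℝ p).hasFDerivAt)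
  refine ext_inner_right ℝ fun z => ?_
  simpa [sub_eq_zero] using congrArg (· z) h0

theorem hasSubgradientAt_of_hasGradientAt_fenchelConj [FiniteDimensional ℝ E] (hf : Continuous f)
    (hu : HasSubgradientAt f w u) {v q : E} (hq : HasGradientAt (fenchelConj f) q v) :
    HasSubgradientAt f v q := by
  obtain ⟨p, hp⟩ := exists_hasSubgradientAt hα hsc hf hu v
  rwa [eq_of_hasGradientAt_fenchelConj hα hsc hp hq]

end Conjugate

section Dual

variable {E F : Type*} [NormedAddCommGroup E] [InnerProductSpace ℝ E] [FiniteDimensional ℝ E]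
  [NormedAddCommGroup F] [InnerProductSpace ℝ F] [FiniteDimensional ℝ F]
  {A : E →ₗ[ℝ] F} {b : F} {xs : E} {ŵ : F}

open LinearMap (adjoint adjoint_inner_left adjoint_inner_right)

theorem apply_eq_of_dual_minimizer {φ : E → ℝ} {q : E} (hφ : HasGradientAt φ q (xs - adjoint A ŵ))
    (hmin : ∀ w, φ (xs - adjoint A ŵ) + ⟪ŵ, b⟫ ≤ φ (xs - adjoint A w) + ⟪w, b⟫) : A q = b := by
  have hloc : IsLocalMin (fun w => φ (xs - adjoint A w) + ⟪b, w⟫) ŵ :=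
    Filter.Eventually.of_forall fun w => by simpa only [real_inner_comm b] using hmin w
  have h0 := hloc.hasFDerivAt_eq_zero <| (hφ.hasFDerivAt.comp ŵ
    ((hasFDerivAt_const xs ŵ).sub (adjoint A).toContinuousLinearMap.hasFDerivAt)).add
    (innerSL ℝ b).hasFDerivAt
  refine ext_inner_right ℝ fun v => ?_
  have := congrArg (· v) h0
  simp only [zero_sub, ContinuousLinearMap.comp_neg, add_apply, neg_apply,
    ContinuousLinearMap.comp_apply, LinearMap.coe_toContinuousLinearMap',
    InnerProductSpace.toDual_apply_apply, coe_innerSL_apply, zero_apply] at this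
  rw [← adjoint_inner_right]
  linarith

theorem norm_sq_adjoint_apply_eq {S : F →ₗ[ℝ] F} (hSsym : ∀ z w : F, ⟪S z, w⟫ = ⟪z, S w⟫)
    (hSinv : (A ∘ₗ adjoint A) ∘ₗ (S ∘ₗ S) = LinearMap.id) (r : F) :
    ‖adjoint A (S (S r))‖ ^ 2 = ‖S r‖ ^ 2 := by
  have hr : A (adjoint A (S (S r))) = r := LinearMap.congr_fun hSinv r
  rw [← real_inner_self_eq_norm_sq, adjoint_inner_left, hr, hSsym, real_inner_self_eq_norm_sq]

variable {f : E → ℝ} {α : ℝ} (hα : 0 < α)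
  (hsc : ∀ x y xs, HasSubgradientAt f xs x → f x + ⟪xs, y - x⟫ + α / 2 * ‖y - x‖ ^ 2 ≤ f y)
include hα hsc

theorem fenchelConj_dual_le {x : E} (hx : HasSubgradientAt f xs x)
    (hmin : ∀ w, fenchelConj f (xs - adjoint A ŵ) + ⟪ŵ, b⟫ ≤
      fenchelConj f (xs - adjoint A w) + ⟪w, b⟫) (v : F) :
    fenchelConj f (xs - adjoint A ŵ) + ⟪ŵ, b⟫ ≤
      fenchelConj f xs - ⟪v, A x - b⟫ + ‖adjoint A v‖ ^ 2 / (2 * α) := by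
  have hsmooth := fenchelConj_le_of_hasSubgradientAt hα hsc hx (xs - adjoint A v)
  rw [sub_sub_cancel_left, inner_neg_right, norm_neg, adjoint_inner_right,
    real_inner_comm] at hsmooth
  rw [inner_sub_right]
  linarith [hmin v]

theorem fenchelConj_dual_le_sub_norm_sq {x : E} (hx : HasSubgradientAt f xs x)
    (hmin : ∀ w, fenchelConj f (xs - adjoint A ŵ) + ⟪ŵ, b⟫ ≤
      fenchelConj f (xs - adjoint A w) + ⟪w, b⟫)
    {S : F →ₗ[ℝ] F} (hSsym : ∀ z w : F, ⟪S z, w⟫ = ⟪z, S w⟫)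
    (hSinv : (A ∘ₗ adjoint A) ∘ₗ (S ∘ₗ S) = LinearMap.id) :
    fenchelConj f (xs - adjoint A ŵ) + ⟪ŵ, b⟫ ≤ fenchelConj f xs - α / 2 * ‖S (A x - b)‖ ^ 2 := by
  set r := A x - b
  have h := fenchelConj_dual_le hα hsc hx hmin (α • S (S r))
  rw [real_inner_smul_left, hSsym, real_inner_self_eq_norm_sq, map_smul, norm_smul, mul_pow,
    norm_sq_adjoint_apply_eq hSsym hSinv, Real.norm_eq_abs, sq_abs] at h
  have hα' : α ^ 2 * ‖S r‖ ^ 2 / (2 * α) = α / 2 * ‖S r‖ ^ 2 := by field_simp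
  linarith

end Dual

/-- `S` plays the role of `(AAᵀ)^{-1/2}`. -/
theorem stmt_19_general {m n : ℕ} (f : EuclideanSpace ℝ (Fin n) → ℝ) (α : ℝ) (hα : 0 < α)
    (hconv : ConvexOn ℝ Set.univ f)
    (hsc : ∀ x y xs : EuclideanSpace ℝ (Fin n),
      (∀ z, f x + ⟪xs, z - x⟫ ≤ f z) →
      f x + ⟪xs, y - x⟫ + α / 2 * ‖y - x‖ ^ 2 ≤ f y)
    (fstar : EuclideanSpace ℝ (Fin n) → ℝ)
    (hfstar : ∀ w, fstar w = ⨆ z : EuclideanSpace ℝ (Fin n), (⟪w, z⟫ - f z))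
    (g : EuclideanSpace ℝ (Fin n) → EuclideanSpace ℝ (Fin n))
    (hg : ∀ w, HasGradientAt fstar (g w) w)
    (A : EuclideanSpace ℝ (Fin n) →ₗ[ℝ] EuclideanSpace ℝ (Fin m))
    (b : EuclideanSpace ℝ (Fin m))
    (x xs : EuclideanSpace ℝ (Fin n))
    (hxs : ∀ z, f x + ⟪xs, z - x⟫ ≤ f z)
    (what : EuclideanSpace ℝ (Fin m))
    (hwhat : ∀ w : EuclideanSpace ℝ (Fin m),
      fstar (xs - LinearMap.adjoint A what) + ⟪what, b⟫ ≤
        fstar (xs - LinearMap.adjoint A w) + ⟪w, b⟫)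
    (xhat xhs : EuclideanSpace ℝ (Fin n))
    (hxhat : xhat = g (xs - LinearMap.adjoint A what))
    (hxhs : xhs = xs - LinearMap.adjoint A what)
    (S : EuclideanSpace ℝ (Fin m) →ₗ[ℝ] EuclideanSpace ℝ (Fin m))
    (hSsym : ∀ z w : EuclideanSpace ℝ (Fin m), ⟪S z, w⟫ = ⟪z, S w⟫)
    (hSinv : (A ∘ₗ LinearMap.adjoint A) ∘ₗ (S ∘ₗ S) = LinearMap.id) :
    A xhat = b ∧
    (∀ z, f xhat + ⟪xhs, z - xhat⟫ ≤ f z) ∧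
    (∀ y : EuclideanSpace ℝ (Fin n), A y = b →
      f y - f xhat - ⟪xhs, y - xhat⟫ ≤
        (f y - f x - ⟪xs, y - x⟫) - α / 2 * ‖S (A x - b)‖ ^ 2) := by
  obtain rfl : fstar = fenchelConj f := funext hfstar
  subst hxhat hxhs
  have hcont : Continuous f := continuousOn_univ.1 (hconv.continuousOn isOpen_univ)
  have hsub := hasSubgradientAt_of_hasGradientAt_fenchelConj hα hsc hcont hxs
    (hg (xs - LinearMap.adjoint A what))
  refine ⟨apply_eq_of_dual_minimizer (hg _) hwhat, hsub, fun y hy => ?_⟩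
  have hdescent := fenchelConj_dual_le_sub_norm_sq hα hsc hxs hwhat hSsym hSinv
  have hshift : ⟪xs, y⟫ - ⟪xs - LinearMap.adjoint A what, y⟫ = ⟪what, b⟫ := by
    rw [← inner_sub_left, sub_sub_cancel, LinearMap.adjoint_inner_left, hy]
  change bregmanDiv f _ _ y ≤ bregmanDiv f xs x y - _
  rw [bregmanDiv_eq_of_hasSubgradientAt hsub, bregmanDiv_eq_of_hasSubgradientAt hxs]
  linarith

/-- Bregman projection onto the affine subspace `L(A,b)` via the dual
problem, together with the descent estimate involving `(AAᵀ)^{-1/2}`. Here `S` plays the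
role of `(AAᵀ)^{-1/2}`: it is symmetric and `(A Aᵀ) ∘ (S ∘ S) = id`. -/
theorem stmt_19 {m n : ℕ} (f : EuclideanSpace ℝ (Fin n) → ℝ) (α : ℝ) (hα : 0 < α)
    (hconv : ConvexOn ℝ Set.univ f)
    (hsc : ∀ x y xs : EuclideanSpace ℝ (Fin n),
      (∀ z, f x + ⟪xs, z - x⟫ ≤ f z) →
      f x + ⟪xs, y - x⟫ + α / 2 * ‖y - x‖ ^ 2 ≤ f y)
    (fstar : EuclideanSpace ℝ (Fin n) → ℝ)
    (hfstar : ∀ w, fstar w = ⨆ z : EuclideanSpace ℝ (Fin n), (⟪w, z⟫ - f z))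
    (g : EuclideanSpace ℝ (Fin n) → EuclideanSpace ℝ (Fin n))
    (hg : ∀ w, HasGradientAt fstar (g w) w)
    (A : EuclideanSpace ℝ (Fin n) →ₗ[ℝ] EuclideanSpace ℝ (Fin m))
    (hAsurj : Function.Surjective A)
    (b : EuclideanSpace ℝ (Fin m))
    (x xs : EuclideanSpace ℝ (Fin n))
    (hxs : ∀ z, f x + ⟪xs, z - x⟫ ≤ f z)
    (what : EuclideanSpace ℝ (Fin m))
    (hwhat : ∀ w : EuclideanSpace ℝ (Fin m),
      fstar (xs - LinearMap.adjoint A what) + ⟪what, b⟫ ≤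
        fstar (xs - LinearMap.adjoint A w) + ⟪w, b⟫)
    (xhat xhs : EuclideanSpace ℝ (Fin n))
    (hxhat : xhat = g (xs - LinearMap.adjoint A what))
    (hxhs : xhs = xs - LinearMap.adjoint A what)
    (S : EuclideanSpace ℝ (Fin m) →ₗ[ℝ] EuclideanSpace ℝ (Fin m))
    (hSsym : ∀ z w : EuclideanSpace ℝ (Fin m), ⟪S z, w⟫ = ⟪z, S w⟫)
    (hSinv : (A ∘ₗ LinearMap.adjoint A) ∘ₗ (S ∘ₗ S) = LinearMap.id) :
    A xhat = b ∧
    (∀ z, f xhat + ⟪xhs, z - xhat⟫ ≤ f z) ∧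
    (∀ y : EuclideanSpace ℝ (Fin n), A y = b →
      f y - f xhat - ⟪xhs, y - xhat⟫ ≤
        (f y - f x - ⟪xs, y - x⟫) - α / 2 * ‖S (A x - b)‖ ^ 2) :=
  stmt_19_general f α hα hconv hsc fstar hfstar g hg A b x xs hxs what hwhat xhat xhs hxhat hxhs S
    hSsym hSinv
end
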